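/- Let ι be a finite type, μ : ι → ι → ℝ³, M : ι → ι → ℝ, and U : ι → ι → ℂ. Define ã[U](u, v) = Σ_{x,y,z,t} ((U x y)(u y) − u x)† (U x z) ((U z t)(v t) − v z) (μ x y · μ z t) (M x z) for u, v : ι → ℂ. For any α : ι → ℝ, define the gauge transformed data u' x = exp(i α x) u x, v' x = exp(i α x) v x, and U' x y = exp(i α x) (U x y) exp(−i α y). Then the discrete stiffness form is gauge invariant: ã[U'](u', v') = ã[U](u, v). -/
import Mathlib


open Complex

/-- Gauge invariance of the discrete covariant stiffness form
ã[U](u, v) = Σ_{x,y,z,t} ((U x y)(u y) − u x)† (U x z) ((U z t)(v t) − v z) (μ x y · μ z t) (M x z):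
for any α : ι → ℝ, replacing u x by exp(iα x) u x, v x by exp(iα x) v x and
U x y by exp(iα x) U x y exp(−iα y) leaves the form unchanged. -/
theorem covariant_stiffness_gauge_invariant
    {ι : Type*} [Fintype ι]
    (μ : ι → ι → Fin 3 → ℝ) (M : ι → ι → ℝ) (U : ι → ι → ℂ)
    (u v : ι → ℂ) (α : ι → ℝ) :
    (∑ x, ∑ y, ∑ z, ∑ t,
        (starRingEnd ℂ)
            ((Complex.exp (Complex.I * (α x : ℂ)) * U x y *
                Complex.exp (-(Complex.I * (α y : ℂ)))) *
              (Complex.exp (Complex.I * (α y : ℂ)) * u y) -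
              Complex.exp (Complex.I * (α x : ℂ)) * u x) *
          (Complex.exp (Complex.I * (α x : ℂ)) * U x z *
            Complex.exp (-(Complex.I * (α z : ℂ)))) *
          ((Complex.exp (Complex.I * (α z : ℂ)) * U z t *
              Complex.exp (-(Complex.I * (α t : ℂ)))) *
            (Complex.exp (Complex.I * (α t : ℂ)) * v t) -
            Complex.exp (Complex.I * (α z : ℂ)) * v z) *
          ((∑ i, μ x y i * μ z t i : ℝ) : ℂ) * (M x z : ℂ))
      = ∑ x, ∑ y, ∑ z, ∑ t,
          (starRingEnd ℂ) (U x y * u y - u x) * U x z * (U z t * v t - v z) *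
            ((∑ i, μ x y i * μ z t i : ℝ) : ℂ) * (M x z : ℂ) := by
  refine Finset.sum_congr rfl fun x _ => Finset.sum_congr rfl fun y _ =>
    Finset.sum_congr rfl fun z _ => Finset.sum_congr rfl fun t _ => ?_
  have hfac : ∀ (a b : ℝ) (W p q : ℂ),
      Complex.exp (Complex.I * (a : ℂ)) * W * Complex.exp (-(Complex.I * (b : ℂ))) *
        (Complex.exp (Complex.I * (b : ℂ)) * p) -
        Complex.exp (Complex.I * (a : ℂ)) * q
      = Complex.exp (Complex.I * (a : ℂ)) * (W * p - q) := by
    intro a b W p q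
    rw [Complex.exp_neg]
    field_simp
  rw [hfac, hfac, map_mul]
  have hconj : (starRingEnd ℂ) (Complex.exp (Complex.I * (α x : ℂ)))
      = Complex.exp (-(Complex.I * (α x : ℂ))) := by
    rw [← Complex.exp_conj]; simp
  rw [hconj]
  have h1 : Complex.exp (-(Complex.I * (α x : ℂ))) * Complex.exp (Complex.I * (α x : ℂ)) = 1 := by
    rw [← Complex.exp_add]; simp
  have h2 : Complex.exp (-(Complex.I * (α z : ℂ))) * Complex.exp (Complex.I * (α z : ℂ)) = 1 := by
    rw [← Complex.exp_add]; simp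
  rw [Complex.exp_neg, Complex.exp_neg]
  field_simp
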